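/- arXiv:2408.16335 — 5 statements merged into one kernel-verified Lean document; each statement's English description precedes it below -/
import Mathlib

section
/- For all n, m ≥ 1, every (n, m)-ruler R satisfies C(|R|, 2) ≥ 2nm − n − m; consequently M₂(n, m) ≥ √(4mn − 2(m + n) + 1/4) + 1/2. -/
/-- The domain of a partial word (a list over `Option A`, where `none` is the hole):
the set of positions carrying a letter. -/
def PartialWord.domain {A : Type*} (w : List (Option A)) : Finset ℕ :=
  (Finset.range w.length).filter fun i => (w.getD i none).isSome

/-- Two partial words are compatible if they have the same length and agree on the
intersection of their domains. -/
def PartialWord.Compatible {A : Type*} (w v : List (Option A)) : Prop :=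
  w.length = v.length ∧
    ∀ i ∈ PartialWord.domain w ∩ PartialWord.domain v, w.getD i none = v.getD i none

/-- A partial word is unbordered if no nonempty proper prefix is compatible with a
suffix of the same length. -/
def PartialWord.Unbordered {A : Type*} (w : List (Option A)) : Prop :=
  ∀ x y : List (Option A), x <+: w → y <:+ w → x ≠ [] → x.length < w.length →
    x.length = y.length → ¬ PartialWord.Compatible x y

/-- The number of holes of a partial word. -/
def PartialWord.holes {A : Type*} (w : List (Option A)) : ℕ :=
  w.countP fun x => x.isNone

/-- `u` repeated `t` times. -/
def listPow {α : Type*} (u : List α) (t : ℕ) : List α := (List.replicate t u).flatten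

/-- A complete sparse ruler of length `n`. -/
def IsCompleteRuler (n : ℕ) (R : Finset ℕ) : Prop :=
  (∀ x ∈ R, x ≤ n) ∧ 0 ∈ R ∧ n ∈ R ∧ ∀ d ≤ n, ∃ r ∈ R, ∃ s ∈ R, r = s + d

/-- Minimum number of marks of a complete sparse ruler of length `n`. -/
noncomputable def M1 (n : ℕ) : ℕ :=
  sInf {k | ∃ R : Finset ℕ, IsCompleteRuler n R ∧ R.card = k}

/-- Maximum number of holes an unbordered partial word of length `n` over an alphabet
of size `k` can have. -/
noncomputable def HB (k n : ℕ) : ℕ :=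
  sSup {h | ∃ w : List (Option (Fin k)),
    w.length = n ∧ PartialWord.Unbordered w ∧ PartialWord.holes w = h}

/-- The ruler (set of partial sums) given by a difference representation. -/
def rulerOfDiffs (D : List ℕ) : Finset ℕ :=
  ((List.range (D.length + 1)).map fun t => (D.take t).sum).toFinset

/-- The difference representation of the extended Wichmann ruler `w₁(r,s,i,j)`. -/
def wichmannDiffs (r s i j : ℕ) : List ℕ :=
  List.replicate r 1 ++ [r + 1] ++ List.replicate r (2 * r + 1) ++
    List.replicate s (4 * r + 3) ++ List.replicate (r + 1) (2 * r + 2) ++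
    List.replicate r 1 ++ List.replicate i (r + 1) ++ [j]

/-- A complete two-dimensional sparse ruler: an `(n,m)`-ruler. -/
def IsRuler2 (n m : ℕ) (R : Finset (ℕ × ℕ)) : Prop :=
  (∀ p ∈ R, p.1 < n ∧ p.2 < m) ∧
    ∀ x y : ℤ, |x| ≤ (n : ℤ) - 1 → |y| ≤ (m : ℤ) - 1 →
      ∃ p ∈ R, ∃ q ∈ R, (p.1 : ℤ) - (q.1 : ℤ) = x ∧ (p.2 : ℤ) - (q.2 : ℤ) = y

/-- Minimum number of marks of an `(n,m)`-ruler. -/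
noncomputable def M2 (n m : ℕ) : ℕ :=
  sInf {k | ∃ R : Finset (ℕ × ℕ), IsRuler2 n m R ∧ R.card = k}

/-- The domain of an `n` by `m` two-dimensional partial word. -/
def domain2 {A : Type*} (n m : ℕ) (w : ℕ × ℕ → Option A) : Finset (ℕ × ℕ) :=
  (Finset.range n ×ˢ Finset.range m).filter fun p => (w p).isSome

/-- An `n` by `m` two-dimensional partial word is unbordered if its domain is an
`(n,m)`-ruler and every nonzero measurable vector can be measured between two
positions carrying distinct letters. -/
def Unbordered2 {A : Type*} (n m : ℕ) (w : ℕ × ℕ → Option A) : Prop :=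
  IsRuler2 n m (domain2 n m w) ∧
    ∀ x y : ℤ, |x| ≤ (n : ℤ) - 1 → |y| ≤ (m : ℤ) - 1 → ¬(x = 0 ∧ y = 0) →
      ∃ p ∈ domain2 n m w, ∃ q ∈ domain2 n m w,
        (p.1 : ℤ) - (q.1 : ℤ) = x ∧ (p.2 : ℤ) - (q.2 : ℤ) = y ∧ w p ≠ w q

/-- Number of holes of an `n` by `m` two-dimensional partial word. -/
def holes2 {A : Type*} (n m : ℕ) (w : ℕ × ℕ → Option A) : ℕ :=
  n * m - (domain2 n m w).card

/-- Maximum number of holes an unbordered `n` by `m` two-dimensional partial word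
over an alphabet of size `k` can have. -/
noncomputable def HB2 (k n m : ℕ) : ℕ :=
  sSup {h | ∃ w : ℕ × ℕ → Option (Fin k), Unbordered2 n m w ∧ holes2 n m w = h}

open Finset Pointwise

/-!
Every nonzero vector `(x, y)` with `|x| < n`, `|y| < m` is a difference `p - q` of two distinct
marks of an `(n, m)`-ruler `R`, so the `(2n - 1)(2m - 1) - 1 = 2(2nm - n - m)` such vectors are
at most as many as the `|R|(|R| - 1) = 2 C(|R|, 2)` ordered pairs of distinct marks. Applied to a
ruler with `M₂(n, m)` marks, this quadratic inequality in `M₂(n, m)` gives the square-root bound.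
-/

theorem Finset.card_sub_self_erase_zero_le {G : Type*} [AddGroup G] [DecidableEq G]
    (S : Finset G) : #((S - S).erase 0) ≤ 2 * (#S).choose 2 :=
  calc #((S - S).erase 0) ≤ #(S.offDiag.image fun pq => pq.1 - pq.2) := by
        refine card_le_card fun x hx => ?_
        obtain ⟨hx0, hx⟩ := mem_erase.1 hx
        obtain ⟨a, ha, b, hb, rfl⟩ := mem_sub.1 hx
        exact mem_image.2 ⟨(a, b), mem_offDiag.2 ⟨ha, hb, fun hab => hx0 (sub_eq_zero.2 hab)⟩, rfl⟩
    _ ≤ #S.offDiag := card_image_le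
    _ = 2 * (#S).choose 2 := by
        rw [← Sym2.two_mul_card_image_offDiag, Sym2.card_image_offDiag]

section Ruler

variable {n m : ℕ} {R : Finset (ℕ × ℕ)}

theorem isRuler2_range_prod_range (n m : ℕ) : IsRuler2 n m (range n ×ˢ range m) := by
  refine ⟨fun p hp => by simpa using hp, fun x y hx hy => ?_⟩
  rw [abs_le] at hx hy
  refine ⟨(x.toNat, y.toNat), ?_, ((-x).toNat, (-y).toNat), ?_, ?_, ?_⟩ <;>
    simp only [mem_product, mem_range] <;> omega

theorem exists_isRuler2_card_eq_M2 (n m : ℕ) : ∃ R, IsRuler2 n m R ∧ #R = M2 n m :=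
  Nat.sInf_mem (s := {k | ∃ R, IsRuler2 n m R ∧ #R = k})
    ⟨_, _, isRuler2_range_prod_range n m, rfl⟩

theorem IsRuler2.nonempty (hR : IsRuler2 n m R) (hn : 1 ≤ n) (hm : 1 ≤ m) : R.Nonempty := by
  obtain ⟨p, hp, -⟩ := hR.2 0 0 (by simpa using hn) (by simpa using hm)
  exact ⟨p, hp⟩

theorem IsRuler2.Icc_prod_Icc_subset_sub (hR : IsRuler2 n m R) :
    Icc (1 - n : ℤ) (n - 1) ×ˢ Icc (1 - m : ℤ) (m - 1) ⊆
      R.image (Prod.map Nat.cast Nat.cast) - R.image (Prod.map Nat.cast Nat.cast) := by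
  intro v hv
  simp only [mem_product, mem_Icc] at hv
  obtain ⟨p, hp, q, hq, h1, h2⟩ := hR.2 v.1 v.2 (abs_le.2 ⟨by omega, by omega⟩)
    (abs_le.2 ⟨by omega, by omega⟩)
  exact mem_sub.2 ⟨_, mem_image_of_mem _ hp, _, mem_image_of_mem _ hq, Prod.ext h1 h2⟩

theorem IsRuler2.two_mul_sub_le_choose_two (hR : IsRuler2 n m R) :
    2 * n * m - n - m ≤ (#R).choose 2 := by
  have hinj : Function.Injective (Prod.map (Nat.cast : ℕ → ℤ) (Nat.cast : ℕ → ℤ)) :=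
    Nat.cast_injective.prodMap Nat.cast_injective
  have hdiff := (card_le_card (erase_subset_erase 0 hR.Icc_prod_Icc_subset_sub)).trans
    (card_sub_self_erase_zero_le _)
  rw [card_image_of_injective _ hinj] at hdiff
  have hbox := pred_card_le_card_erase.trans hdiff
  rw [card_product, Int.card_Icc, Int.card_Icc] at hbox
  cases n with
  | zero => simp
  | succ a =>
  cases m with
  | zero => simp
  | succ b =>
  have ha : ((a + 1 : ℕ) - 1 + 1 - (1 - (a + 1 : ℕ)) : ℤ).toNat = 2 * a + 1 := by omega
  have hb : ((b + 1 : ℕ) - 1 + 1 - (1 - (b + 1 : ℕ)) : ℤ).toNat = 2 * b + 1 := by omega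
  rw [ha, hb] at hbox
  have h1 : 2 * (a + 1) * (b + 1) = 2 * (a * b) + 2 * a + 2 * b + 2 := by ring
  have h2 : (2 * a + 1) * (2 * b + 1) = 4 * (a * b) + 2 * a + 2 * b + 1 := by ring
  omega

end Ruler

theorem sqrt_add_quarter_add_half_le {a k : ℝ} (h : a ≤ k * (k - 1)) (hk : 1 / 2 ≤ k) :
    √(a + 1 / 4) + 1 / 2 ≤ k := by
  have : √(a + 1 / 4) ≤ k - 1 / 2 := Real.sqrt_le_iff.2 ⟨by linarith, by nlinarith⟩
  linarith

/-- For all `n, m ≥ 1`, every `(n,m)`-ruler `R` satisfies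
`C(|R|, 2) ≥ 2nm - n - m`; consequently `M₂(n,m) ≥ √(4mn - 2(m+n) + 1/4) + 1/2`. -/
theorem ruler2_lower_bound (n m : ℕ) (hn : 1 ≤ n) (hm : 1 ≤ m) :
    (∀ R : Finset (ℕ × ℕ), IsRuler2 n m R → 2 * n * m - n - m ≤ (R.card).choose 2) ∧
    Real.sqrt (4 * (m : ℝ) * (n : ℝ) - 2 * ((m : ℝ) + (n : ℝ)) + 1 / 4) + 1 / 2 ≤
      (M2 n m : ℝ) := by
  refine ⟨fun R hR => hR.two_mul_sub_le_choose_two, ?_⟩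
  obtain ⟨R, hR, hcard⟩ := exists_isRuler2_card_eq_M2 n m
  have hchoose := hR.two_mul_sub_le_choose_two
  have hcard_pos := (hR.nonempty hn hm).card_pos
  rw [hcard] at hchoose hcard_pos
  have hnm : n + m ≤ 2 * n * m := by nlinarith
  have hreal : (2 * n * m - n - m : ℝ) ≤ M2 n m * (M2 n m - 1) / 2 := by
    have := (Nat.cast_le (α := ℝ)).2 hchoose
    rw [Nat.cast_sub (by omega), Nat.cast_sub (by omega), Nat.cast_choose_two] at this
    exact_mod_cast this
  have hM2_ge_one : (1 : ℝ) ≤ M2 n m := by exact_mod_cast hcard_pos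
  apply sqrt_add_quarter_add_half_le <;> linarith
end

section
/- There exists a constant C > 0 such that for all n, m ≥ 1, M₂(n, m) ≤ 2√2·√(nm) + C(√n + √m). -/
namespace M2Aux

def cols (n a : ℕ) : Finset ℕ :=
  (Finset.range ((n - 1) / a + 2)).image fun i => min (a * i) (n - 1)

def rulerR (n m a b : ℕ) : Finset (ℕ × ℕ) :=
  cols n a ×ˢ cols m b ∪
    Finset.range (min a n) ×ˢ Finset.range (min b m) ∪
    Finset.range (min a n) ×ˢ Finset.Ico (m - b) m

lemma cols_le {n a c : ℕ} (hc : c ∈ cols n a) : c ≤ n - 1 := by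
  rw [cols, Finset.mem_image] at hc
  obtain ⟨i, -, rfl⟩ := hc
  exact min_le_right _ _

lemma mem_grid {n m a b c r : ℕ} (hc : c ∈ cols n a) (hr : r ∈ cols m b) :
    (c, r) ∈ rulerR n m a b :=
  Finset.mem_union_left _ (Finset.mem_union_left _ (Finset.mem_product.mpr ⟨hc, hr⟩))

lemma mem_S1 {n m a b u v : ℕ} (h1 : u < a) (h2 : u < n) (h3 : v < b) (h4 : v < m) :
    (u, v) ∈ rulerR n m a b :=
  Finset.mem_union_left _ (Finset.mem_union_right _
    (Finset.mem_product.mpr ⟨Finset.mem_range.mpr (lt_min h1 h2),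
      Finset.mem_range.mpr (lt_min h3 h4)⟩))

lemma mem_S3 {n m a b u v : ℕ} (h1 : u < a) (h2 : u < n) (h3 : m ≤ v + b) (h4 : v < m) :
    (u, v) ∈ rulerR n m a b :=
  Finset.mem_union_right _
    (Finset.mem_product.mpr ⟨Finset.mem_range.mpr (lt_min h1 h2),
      Finset.mem_Ico.mpr ⟨by omega, h4⟩⟩)

lemma exists_col (n a : ℕ) (ha : 0 < a) (x : ℕ) (hx : x ≤ n - 1) :
    ∃ c ∈ cols n a, x ≤ c ∧ c - x < a := by
  refine ⟨min (a * ((x + a - 1) / a)) (n - 1), ?_, ?_, ?_⟩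
  · rw [cols, Finset.mem_image]
    refine ⟨(x + a - 1) / a, Finset.mem_range.mpr ?_, rfl⟩
    by_contra hcon
    push_neg at hcon
    have h1 := Nat.mul_le_mul_left a hcon
    rw [Nat.mul_add] at h1
    have h2 := Nat.div_add_mod (x + a - 1) a
    have h3 := Nat.mod_lt (x + a - 1) ha
    have h4 := Nat.div_add_mod (n - 1) a
    have h5 := Nat.mod_lt (n - 1) ha
    omega
  · have h2 := Nat.div_add_mod (x + a - 1) a
    have h3 := Nat.mod_lt (x + a - 1) ha
    omega
  · have h2 := Nat.div_add_mod (x + a - 1) a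
    have h3 := Nat.mod_lt (x + a - 1) ha
    omega

lemma exists_row_neg (m b : ℕ) (hb : 0 < b) (y : ℕ) (hy : y ≤ m - 1) :
    ∃ r ∈ cols m b, r + y ≤ m - 1 ∧ m ≤ r + y + b := by
  have h2 := Nat.div_add_mod (m - 1 - y) b
  have h3 := Nat.mod_lt (m - 1 - y) hb
  refine ⟨b * ((m - 1 - y) / b), ?_, by omega, by omega⟩
  rw [cols, Finset.mem_image]
  refine ⟨(m - 1 - y) / b, Finset.mem_range.mpr ?_, by omega⟩
  exact Nat.lt_of_le_of_lt (Nat.div_le_div_right (Nat.sub_le _ _)) (by omega)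

lemma cover (n m a b : ℕ) (hn : 1 ≤ n) (hm : 1 ≤ m) (ha : 0 < a) (hb : 0 < b)
    (x y : ℤ) (hx0 : 0 ≤ x) (hx : x ≤ (n : ℤ) - 1) (hy : |y| ≤ (m : ℤ) - 1) :
    ∃ p ∈ rulerR n m a b, ∃ q ∈ rulerR n m a b,
      (p.1 : ℤ) - (q.1 : ℤ) = x ∧ (p.2 : ℤ) - (q.2 : ℤ) = y := by
  lift x to ℕ using hx0 with x'
  have hx' : x' ≤ n - 1 := by omega
  obtain ⟨c, hc, hxc, hca⟩ := exists_col n a ha x' hx'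
  have hcn : c ≤ n - 1 := cols_le hc
  have habs := abs_le.mp hy
  rcases le_or_gt 0 y with hy0 | hy0
  · lift y to ℕ using hy0 with y'
    have hy' : y' ≤ m - 1 := by omega
    obtain ⟨r, hr, hyr, hrb⟩ := exists_col m b hb y' hy'
    have hrm : r ≤ m - 1 := cols_le hr
    refine ⟨(c, r), mem_grid hc hr, (c - x', r - y'),
      mem_S1 (by omega) (by omega) (by omega) (by omega), by simp; omega, by simp; omega⟩
  · obtain ⟨y', hy'eq⟩ : ∃ y' : ℕ, y = -(y' : ℤ) := ⟨(-y).toNat, by omega⟩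
    have hy1 : 1 ≤ y' ∧ y' ≤ m - 1 := by omega
    obtain ⟨r, hr, hr1, hr2⟩ := exists_row_neg m b hb y' hy1.2
    refine ⟨(c, r), mem_grid hc hr, (c - x', r + y'),
      mem_S3 (by omega) (by omega) (by omega) (by omega), by simp; omega, by simp; omega⟩

lemma isRuler2_rulerR (n m a b : ℕ) (hn : 1 ≤ n) (hm : 1 ≤ m) (ha : 0 < a) (hb : 0 < b) :
    IsRuler2 n m (rulerR n m a b) := by
  constructor
  · intro p hp
    simp only [rulerR, Finset.mem_union, Finset.mem_product, Finset.mem_range,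
      Finset.mem_Ico] at hp
    rcases hp with (⟨h1, h2⟩ | ⟨h1, h2⟩) | ⟨h1, h2⟩
    · have := cols_le h1; have := cols_le h2; omega
    · omega
    · omega
  · intro x y hx hy
    rcases le_or_gt 0 x with h | h
    · exact cover n m a b hn hm ha hb x y h (by have := abs_le.mp hx; linarith) hy
    · obtain ⟨p, hp, q, hq, e1, e2⟩ :=
        cover n m a b hn hm ha hb (-x) (-y) (by linarith)
          (by have := abs_le.mp hx; linarith) (by rwa [abs_neg])
      exact ⟨q, hq, p, hp, by linarith, by linarith⟩

lemma card_rulerR_le (n m a b : ℕ) :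
    (rulerR n m a b).card ≤ ((n - 1) / a + 2) * ((m - 1) / b + 2) + (a * b + a * b) := by
  have hG : (cols n a ×ˢ cols m b).card ≤ ((n - 1) / a + 2) * ((m - 1) / b + 2) := by
    rw [Finset.card_product]
    exact Nat.mul_le_mul
      (le_trans (Finset.card_image_le) (le_of_eq (Finset.card_range _)))
      (le_trans (Finset.card_image_le) (le_of_eq (Finset.card_range _)))
  have hS1 : (Finset.range (min a n) ×ˢ Finset.range (min b m)).card ≤ a * b := by
    rw [Finset.card_product, Finset.card_range, Finset.card_range]
    exact Nat.mul_le_mul (min_le_left _ _) (min_le_left _ _)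
  have hS3 : (Finset.range (min a n) ×ˢ Finset.Ico (m - b) m).card ≤ a * b := by
    rw [Finset.card_product, Finset.card_range, Nat.card_Ico]
    exact Nat.mul_le_mul (min_le_left _ _) (by omega)
  calc (rulerR n m a b).card
      ≤ (cols n a ×ˢ cols m b ∪
          Finset.range (min a n) ×ˢ Finset.range (min b m)).card
        + (Finset.range (min a n) ×ˢ Finset.Ico (m - b) m).card :=
        Finset.card_union_le _ _
    _ ≤ ((cols n a ×ˢ cols m b).card
        + (Finset.range (min a n) ×ˢ Finset.range (min b m)).card)
        + (Finset.range (min a n) ×ˢ Finset.Ico (m - b) m).card := by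
        exact Nat.add_le_add_right (Finset.card_union_le _ _) _
    _ ≤ ((n - 1) / a + 2) * ((m - 1) / b + 2) + (a * b + a * b) := by omega

lemma M2_le_card {n m : ℕ} {R : Finset (ℕ × ℕ)} (h : IsRuler2 n m R) : M2 n m ≤ R.card :=
  Nat.sInf_le ⟨R, h, rfl⟩

lemma le_of_sq_le_sq {u v : ℝ} (hu : 0 ≤ u) (hv : 0 ≤ v) (h : u ^ 2 ≤ v ^ 2) : u ≤ v := by
  nlinarith

end M2Aux

/-- There exists a constant `C > 0` such that for all `n, m ≥ 1`,
`M₂(n,m) ≤ 2√2·√(nm) + C(√n + √m)`. -/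
theorem M2_upper_bound :
    ∃ C : ℝ, 0 < C ∧ ∀ n m : ℕ, 1 ≤ n → 1 ≤ m →
      (M2 n m : ℝ) ≤ 2 * Real.sqrt 2 * Real.sqrt ((n : ℝ) * (m : ℝ)) +
        C * (Real.sqrt (n : ℝ) + Real.sqrt (m : ℝ)) := by
  refine ⟨20, by norm_num, ?_⟩
  intro n m hn hm
  obtain ⟨V, hV_def⟩ : ∃ V : ℕ, V = M2 n m := ⟨_, rfl⟩
  rw [← hV_def]
  obtain ⟨t, ht_def⟩ : ∃ t, t = Nat.sqrt ((m + 1) / 2) := ⟨_, rfl⟩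
  obtain ⟨u, hu_def⟩ : ∃ u, u = Nat.sqrt n := ⟨_, rfl⟩
  obtain ⟨a, ha_def⟩ : ∃ a, a = u + 1 := ⟨_, rfl⟩
  obtain ⟨b, hb_def⟩ : ∃ b, b = t + 1 := ⟨_, rfl⟩
  obtain ⟨D1, hD1_def⟩ : ∃ d, d = (n - 1) / a := ⟨_, rfl⟩
  obtain ⟨D2, hD2_def⟩ : ∃ d, d = (m - 1) / b := ⟨_, rfl⟩
  have ha : 0 < a := by omega
  have hb : 0 < b := by omega
  have hM2 : V ≤ (D1 + 2) * (D2 + 2) + (a * b + a * b) := by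
    rw [hV_def, hD1_def, hD2_def]
    exact le_trans (M2Aux.M2_le_card (M2Aux.isRuler2_rulerR n m a b hn hm ha hb))
      (M2Aux.card_rulerR_le n m a b)
  -- natural number facts
  have hnat1 : n ≤ a * a := by
    rw [ha_def, hu_def]
    simpa [Nat.succ_eq_add_one] using (Nat.lt_succ_sqrt n).le
  have hnat2 : u * u ≤ n := by
    rw [hu_def]
    simpa [pow_two] using Nat.sqrt_le' n
  have hnat3 : m ≤ 2 * (b * b) := by
    have h := Nat.lt_succ_sqrt ((m + 1) / 2)
    simp only [Nat.succ_eq_add_one] at h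
    rw [hb_def, ht_def]
    omega
  have hnat4 : 2 * (t * t) ≤ m + 1 := by
    have h : Nat.sqrt ((m + 1) / 2) * Nat.sqrt ((m + 1) / 2) ≤ (m + 1) / 2 := by
      simpa [pow_two] using Nat.sqrt_le' ((m + 1) / 2)
    rw [ht_def]
    omega
  have hdiv1 : a * D1 ≤ n := by
    rw [hD1_def]
    have := Nat.div_add_mod (n - 1) a
    omega
  have hdiv2 : b * D2 ≤ m := by
    rw [hD2_def]
    have := Nat.div_add_mod (m - 1) b
    omega
  clear hV_def ht_def hu_def hD1_def hD2_def
  -- real abbreviations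
  obtain ⟨sn, hsn_def⟩ : ∃ x : ℝ, x = Real.sqrt n := ⟨_, rfl⟩
  obtain ⟨sm, hsm_def⟩ : ∃ x : ℝ, x = Real.sqrt m := ⟨_, rfl⟩
  obtain ⟨s2, hs2_def⟩ : ∃ x : ℝ, x = Real.sqrt 2 := ⟨_, rfl⟩
  have hsn0 : 0 ≤ sn := hsn_def ▸ Real.sqrt_nonneg _
  have hsm0 : 0 ≤ sm := hsm_def ▸ Real.sqrt_nonneg _
  have hs20 : 0 ≤ s2 := hs2_def ▸ Real.sqrt_nonneg _
  have hsnsq : sn ^ 2 = n := by rw [hsn_def]; exact Real.sq_sqrt (by positivity)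
  have hsmsq : sm ^ 2 = m := by rw [hsm_def]; exact Real.sq_sqrt (by positivity)
  have hs2sq : s2 ^ 2 = 2 := by rw [hs2_def]; exact Real.sq_sqrt (by norm_num)
  have hsqrtnm : Real.sqrt ((n:ℝ) * m) = sn * sm := by
    rw [hsn_def, hsm_def]; exact Real.sqrt_mul (by positivity) _
  rw [hsqrtnm, ← hs2_def, ← hsn_def, ← hsm_def]
  clear hsn_def hsm_def hs2_def
  have hsn1 : 1 ≤ sn := M2Aux.le_of_sq_le_sq (by norm_num) hsn0
    (by rw [hsnsq]; exact_mod_cast hn)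
  have hsm1 : 1 ≤ sm := M2Aux.le_of_sq_le_sq (by norm_num) hsm0
    (by rw [hsmsq]; exact_mod_cast hm)
  have hs21 : 1 ≤ s2 := M2Aux.le_of_sq_le_sq (by norm_num) hs20 (by rw [hs2sq]; norm_num)
  have hs2le : s2 ≤ 3 / 2 := M2Aux.le_of_sq_le_sq hs20 (by norm_num) (by rw [hs2sq]; norm_num)
  -- cast facts to ℝ
  have hA0 : (0:ℝ) < (a:ℝ) := by exact_mod_cast ha
  have hB0 : (0:ℝ) < (b:ℝ) := by exact_mod_cast hb
  have cM : (V:ℝ) ≤ ((D1:ℝ) + 2) * ((D2:ℝ) + 2) + ((a:ℝ) * b + (a:ℝ) * b) := by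
    have := (Nat.cast_le (α := ℝ)).mpr hM2
    push_cast at this
    exact this
  have cA1 : (n:ℝ) ≤ (a:ℝ) * (a:ℝ) := by exact_mod_cast hnat1
  have cA2 : (u:ℝ) * (u:ℝ) ≤ (n:ℝ) := by exact_mod_cast hnat2
  have cA3 : (a:ℝ) = (u:ℝ) + 1 := by rw [ha_def]; push_cast; ring
  have cB1 : (m:ℝ) ≤ 2 * ((b:ℝ) * (b:ℝ)) := by exact_mod_cast hnat3
  have cB2 : 2 * ((t:ℝ) * (t:ℝ)) ≤ (m:ℝ) + 1 := by exact_mod_cast hnat4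
  have cB3 : (b:ℝ) = (t:ℝ) + 1 := by rw [hb_def]; push_cast; ring
  have cD1 : (a:ℝ) * (D1:ℝ) ≤ (n:ℝ) := by exact_mod_cast hdiv1
  have cD2 : (b:ℝ) * (D2:ℝ) ≤ (m:ℝ) := by exact_mod_cast hdiv2
  have hD10 : (0:ℝ) ≤ (D1:ℝ) := Nat.cast_nonneg _
  have hD20 : (0:ℝ) ≤ (D2:ℝ) := Nat.cast_nonneg _
  clear hM2 hnat1 hnat2 hnat3 hnat4 hdiv1 hdiv2 ha_def hb_def ha hb hn hm
  -- derived real bounds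
  have hsnA : sn ≤ (a:ℝ) := M2Aux.le_of_sq_le_sq hsn0 hA0.le
    (by rw [hsnsq, pow_two]; exact cA1)
  have hA2 : (a:ℝ) ≤ sn + 1 := by
    have h3 : (u:ℝ) ≤ sn := M2Aux.le_of_sq_le_sq (Nat.cast_nonneg u) hsn0
      (by rw [hsnsq, pow_two]; exact cA2)
    rw [cA3]; linarith
  have hsmB : sm ≤ s2 * (b:ℝ) := by
    refine M2Aux.le_of_sq_le_sq hsm0 (mul_nonneg hs20 hB0.le) ?_
    rw [hsmsq, mul_pow, hs2sq, pow_two]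
    linarith [cB1]
  have hB2 : s2 * (b:ℝ) ≤ sm + 1 + s2 := by
    have h3 : s2 * (t:ℝ) ≤ sm + 1 := by
      refine M2Aux.le_of_sq_le_sq (mul_nonneg hs20 (Nat.cast_nonneg t)) (by linarith) ?_
      rw [mul_pow, hs2sq, pow_two]
      have hexp : (sm + 1) ^ 2 = sm ^ 2 + 2 * sm + 1 := by ring
      rw [hexp, hsmsq]
      linarith [cB2]
    rw [cB3, mul_add, mul_one]; linarith
  have hDn : (D1:ℝ) ≤ sn := by
    refine (mul_le_mul_iff_right₀ hA0).mp ?_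
    calc (a:ℝ) * (D1:ℝ) ≤ (n:ℝ) := cD1
      _ = sn * sn := by rw [← hsnsq, pow_two]
      _ ≤ (a:ℝ) * sn := mul_le_mul_of_nonneg_right hsnA hsn0
  have hDm : (D2:ℝ) ≤ s2 * sm := by
    refine (mul_le_mul_iff_right₀ hB0).mp ?_
    calc (b:ℝ) * (D2:ℝ) ≤ (m:ℝ) := cD2
      _ = sm * sm := by rw [← hsmsq, pow_two]
      _ ≤ (s2 * (b:ℝ)) * sm := mul_le_mul_of_nonneg_right hsmB hsm0
      _ = (b:ℝ) * (s2 * sm) := by ring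
  have e1 : ((D1:ℝ) + 2) * ((D2:ℝ) + 2) ≤ (sn + 2) * (s2 * sm + 2) :=
    mul_le_mul (by linarith) (by linarith) (by linarith) (by linarith)
  have e2 : (a:ℝ) * (b:ℝ) + (a:ℝ) * (b:ℝ) ≤ (sn + 1) * (s2 * (sm + 1 + s2)) := by
    have h := mul_le_mul hA2 hB2 (mul_nonneg hs20 hB0.le) (by linarith)
    calc (a:ℝ) * (b:ℝ) + (a:ℝ) * (b:ℝ) = s2 * ((a:ℝ) * (s2 * (b:ℝ))) := by
          have hh : s2 * ((a:ℝ) * (s2 * (b:ℝ))) = s2 ^ 2 * ((a:ℝ) * (b:ℝ)) := by ring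
          rw [hh, hs2sq]; ring
      _ ≤ s2 * ((sn + 1) * (sm + 1 + s2)) := mul_le_mul_of_nonneg_left h hs20
      _ = (sn + 1) * (s2 * (sm + 1 + s2)) := by ring
  have e3 : (sn + 2) * (s2 * sm + 2) + (sn + 1) * (s2 * (sm + 1 + s2))
      ≤ 2 * s2 * (sn * sm) + 20 * (sn + sm) := by
    nlinarith [mul_nonneg (by linarith : (0:ℝ) ≤ 3/2 - s2) hsn0,
      mul_nonneg (by linarith : (0:ℝ) ≤ 3/2 - s2) hsm0,
      mul_nonneg (by linarith : (0:ℝ) ≤ sn - 1) hsm0]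
  linarith
end

section
/- There exists a constant C > 0 such that for all n, m ≥ 1, HB2₂(n, m) ≥ nm − 2√2·√(nm) − C(√n + √m), where HB2₂ is taken over a binary alphabet; consequently the same lower bound holds for HB2_k(n, m) for every k ≥ 2. -/
/-!
Binary words with a small domain. With `a = ⌊√n⌋` and `b = ⌊√(m/2)⌋`, `gridWord` puts two
`a × b` blocks of `true` in the bottom corners and `false` on the grid formed by the columns in
`gridLine (n - 1) a` and the rows `≥ b` in `gridLine (m - 1) b`. An offset `(±u, v)` with `v > 0`
is realised by a grid point in a row `h ∈ [v, v + b)` against a point of the left, resp. right,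
block; a horizontal offset `u` by the marker row `b + 1` (`false` only at column `0`) when `u` is
a grid column, and otherwise by a grid column `g ∈ (u, u + a)` against the `true` segment of the
top row. Blocks and grid each have about `√2·√(nm)` positions. If one side is below 16, the
words `combWord` need `O(√n)` positions per row, and if both are, `HB2 ≥ 0` suffices.
-/

open Finset

section Basic

variable {A B : Type*} {n m k : ℕ}

lemma mem_domain2 {w : ℕ × ℕ → Option A} {p : ℕ × ℕ} :
    p ∈ domain2 n m w ↔ p.1 < n ∧ p.2 < m ∧ (w p).isSome := by
  simp [domain2, and_assoc]

lemma card_domain2_le_mul (w : ℕ × ℕ → Option A) : #(domain2 n m w) ≤ n * m :=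
  (card_filter_le _ _).trans_eq (by simp)

lemma holes2_le_HB2 {w : ℕ × ℕ → Option (Fin k)} (h : Unbordered2 n m w) :
    holes2 n m w ≤ HB2 k n m :=
  le_csSup ⟨n * m, fun _ ⟨_, _, hw⟩ => hw ▸ Nat.sub_le _ _⟩ ⟨w, h, rfl⟩

lemma domain2_map (w : ℕ × ℕ → Option A) (f : A → B) :
    domain2 n m (fun p => (w p).map f) = domain2 n m w := by
  simp [domain2]

lemma Unbordered2.map {w : ℕ × ℕ → Option A} (h : Unbordered2 n m w) {f : A → B}
    (hf : Function.Injective f) : Unbordered2 n m (fun p => (w p).map f) := by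
  rw [Unbordered2, domain2_map]
  refine ⟨h.1, fun x y hx hy hxy => ?_⟩
  obtain ⟨p, hp, q, hq, hpq₁, hpq₂, hne⟩ := h.2 x y hx hy hxy
  exact ⟨p, hp, q, hq, hpq₁, hpq₂, (Option.map_injective hf).ne hne⟩

lemma domain2_swap (w : ℕ × ℕ → Option A) :
    domain2 m n (w ∘ Prod.swap) = (domain2 n m w).map (Equiv.prodComm ℕ ℕ).toEmbedding := by
  ext ⟨X, Y⟩
  simp [mem_domain2, and_left_comm]

lemma card_domain2_swap (w : ℕ × ℕ → Option A) :
    #(domain2 m n (w ∘ Prod.swap)) = #(domain2 n m w) := by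
  rw [domain2_swap, card_map]

lemma Unbordered2.swap {w : ℕ × ℕ → Option A} (h : Unbordered2 n m w) :
    Unbordered2 m n (w ∘ Prod.swap) := by
  have hmem : ∀ p ∈ domain2 n m w, p.swap ∈ domain2 m n (w ∘ Prod.swap) := fun p hp => by
    rw [domain2_swap]; exact mem_map_of_mem _ hp
  refine ⟨⟨fun p hp => ?_, fun x y hx hy => ?_⟩, fun x y hx hy hxy => ?_⟩
  · exact (mem_domain2.mp hp).imp_right And.left
  · obtain ⟨p, hp, q, hq, hpq₁, hpq₂⟩ := h.1.2 y x hy hx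
    exact ⟨p.swap, hmem p hp, q.swap, hmem q hq, hpq₂, hpq₁⟩
  · obtain ⟨p, hp, q, hq, hpq₁, hpq₂, hne⟩ := h.2 y x hy hx (by tauto)
    exact ⟨p.swap, hmem p hp, q.swap, hmem q hq, hpq₂, hpq₁, by simpa using hne⟩

lemma sub_card_domain2_le_HB2 (hk : 2 ≤ k) {w : ℕ × ℕ → Option Bool}
    (h : Unbordered2 n m w) : (n * m : ℝ) - #(domain2 n m w) ≤ HB2 k n m := by
  let f : Bool → Fin k := Fin.castLE hk ∘ finTwoEquiv.symm
  have hf : Function.Injective f := (Fin.castLE_injective hk).comp finTwoEquiv.symm.injective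
  have hholes := holes2_le_HB2 (h.map hf)
  rw [holes2, domain2_map] at hholes
  have hcard := card_domain2_le_mul (n := n) (m := m) w
  rw [← Nat.cast_mul, ← Nat.cast_sub hcard]
  exact_mod_cast hholes

end Basic

section Offsets

variable {A : Type*} {n m : ℕ}

def DistinctAtOffset (n m : ℕ) (w : ℕ × ℕ → Option A) (x y : ℤ) : Prop :=
  ∃ p ∈ domain2 n m w, ∃ q ∈ domain2 n m w,
    (p.1 : ℤ) - (q.1 : ℤ) = x ∧ (p.2 : ℤ) - (q.2 : ℤ) = y ∧ w p ≠ w q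

lemma DistinctAtOffset.neg {w : ℕ × ℕ → Option A} {x y : ℤ}
    (h : DistinctAtOffset n m w x y) : DistinctAtOffset n m w (-x) (-y) := by
  obtain ⟨p, hp, q, hq, hx, hy, hne⟩ := h
  exact ⟨q, hq, p, hp, by omega, by omega, hne.symm⟩

lemma distinctAtOffset_of_eq_some {w : ℕ × ℕ → Option A} {X Y X' Y' : ℕ} {c c' : A}
    {x y : ℤ} (hX : X < n) (hY : Y < m) (hX' : X' < n) (hY' : Y' < m)
    (hw : w (X, Y) = some c) (hw' : w (X', Y') = some c') (hc : c ≠ c')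
    (hx : (X : ℤ) - X' = x) (hy : (Y : ℤ) - Y' = y) : DistinctAtOffset n m w x y :=
  ⟨(X, Y), mem_domain2.mpr ⟨hX, hY, by simp [hw]⟩, (X', Y'),
    mem_domain2.mpr ⟨hX', hY', by simp [hw']⟩, hx, hy, by simp [hw, hw', hc]⟩

lemma unbordered2_of_distinctAtOffset {w : ℕ × ℕ → Option A} {p₀ : ℕ × ℕ}
    (hp₀ : p₀ ∈ domain2 n m w)
    (h : ∀ u v : ℕ, u < n → v < m → (u, v) ≠ (0, 0) →
      DistinctAtOffset n m w u v ∧ DistinctAtOffset n m w (-u) v) :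
    Unbordered2 n m w := by
  have hupper : ∀ x y : ℤ, 0 ≤ y → |x| ≤ n - 1 → |y| ≤ m - 1 → ¬(x = 0 ∧ y = 0) →
      DistinctAtOffset n m w x y := by
    intro x y hy hxn hym hxy
    lift y to ℕ using hy
    obtain ⟨u, rfl | rfl⟩ := Int.eq_nat_or_neg x <;>
      simp only [abs_neg, Nat.abs_cast] at hxn hym hxy
    · exact (h u y (by omega) (by omega) (by simpa using hxy)).1
    · exact (h u y (by omega) (by omega) (by simpa using hxy)).2
  have hsep : ∀ x y : ℤ, |x| ≤ n - 1 → |y| ≤ m - 1 → ¬(x = 0 ∧ y = 0) →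
      DistinctAtOffset n m w x y := by
    intro x y hxn hym hxy
    rcases le_total 0 y with hy | hy
    · exact hupper x y hy hxn hym hxy
    · simpa using (hupper (-x) (-y) (by omega) (by simpa using hxn) (by simpa using hym)
        (by omega)).neg
  refine ⟨⟨fun p hp => (mem_domain2.mp hp).imp_right And.left, fun x y hxn hym => ?_⟩, hsep⟩
  by_cases hxy : x = 0 ∧ y = 0
  · exact ⟨p₀, hp₀, p₀, hp₀, by simp [hxy.1], by simp [hxy.2]⟩
  · obtain ⟨p, hp, q, hq, hx, hy, -⟩ := hsep x y hxn hym hxy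
    exact ⟨p, hp, q, hq, hx, hy⟩

end Offsets

section GridLine

variable {N a g x : ℕ}

/-- The endpoint `N` is added so that every window `[x, x + a)` with `x ≤ N` meets the line. -/
def gridLine (N a : ℕ) : Finset ℕ := (range (N + 1)).filter fun X => a ∣ X ∨ X = N

lemma mem_gridLine : g ∈ gridLine N a ↔ g ≤ N ∧ (a ∣ g ∨ g = N) := by
  simp [gridLine]

lemma zero_mem_gridLine : 0 ∈ gridLine N a := mem_gridLine.mpr ⟨N.zero_le, .inl (dvd_zero a)⟩

lemma self_mem_gridLine : N ∈ gridLine N a := mem_gridLine.mpr ⟨le_rfl, .inr rfl⟩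

lemma card_gridLine_le : #(gridLine N a) ≤ N / a + 2 := by
  have hsub : gridLine N a ⊆ insert N ((range (N / a + 1)).image (· * a)) := by
    intro g hg
    obtain ⟨hgN, ⟨k, rfl⟩ | rfl⟩ := mem_gridLine.mp hg
    · rcases Nat.eq_zero_or_pos a with rfl | ha
      · simp
      · refine mem_insert_of_mem (mem_image.mpr ⟨k, ?_, mul_comm _ _⟩)
        exact mem_range.mpr (Nat.lt_succ_of_le ((Nat.le_div_iff_mul_le ha).mpr
          (by rwa [mul_comm])))
    · exact mem_insert_self _ _
  calc #(gridLine N a) ≤ #(range (N / a + 1)) + 1 :=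
        (card_le_card hsub).trans ((card_insert_le _ _).trans
          (Nat.add_le_add_right card_image_le 1))
    _ = N / a + 2 := by simp

lemma exists_mem_gridLine_window (ha : 0 < a) (hx : x ≤ N) :
    ∃ g ∈ gridLine N a, x ≤ g ∧ g < x + a := by
  set M := a * ((x + a - 1) / a)
  have hM : x ≤ M ∧ M < x + a := by
    have := Nat.div_add_mod (x + a - 1) a
    have := Nat.mod_lt (x + a - 1) ha
    omega
  by_cases hMN : M ≤ N
  · exact ⟨M, mem_gridLine.mpr ⟨hMN, .inl (dvd_mul_right _ _)⟩, hM⟩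
  · exact ⟨N, self_mem_gridLine, hx, by omega⟩

lemma eq_zero_or_le_of_mem_gridLine (haN : a ≤ N) (hg : g ∈ gridLine N a) : g = 0 ∨ a ≤ g := by
  obtain ⟨-, hdvd | rfl⟩ := mem_gridLine.mp hg
  · rcases Nat.eq_zero_or_pos g with h | h
    · exact .inl h
    · exact .inr (Nat.le_of_dvd h hdvd)
  · exact .inr haN

lemma add_one_notMem_gridLine (ha : 2 ≤ a) (hN : a + 1 ≠ N) : a + 1 ∉ gridLine N a := by
  rw [mem_gridLine]
  rintro ⟨-, hdvd | h⟩
  · have := Nat.le_of_dvd one_pos ((Nat.dvd_add_right (dvd_refl a)).mp hdvd)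
    omega
  · exact hN h

end GridLine

lemma sub_one_div_sqrt_le (n : ℕ) : (n - 1) / n.sqrt ≤ n.sqrt + 2 := by
  have := Nat.lt_succ_sqrt n
  apply Nat.div_le_of_le_mul
  rw [Nat.succ_eq_add_one] at this
  ring_nf at this ⊢
  omega

lemma sub_one_div_sqrt_half_le (m : ℕ) : (m - 1) / (m / 2).sqrt ≤ 2 * (m / 2).sqrt + 4 := by
  have := Nat.lt_succ_sqrt (m / 2)
  apply Nat.div_le_of_le_mul
  rw [Nat.succ_eq_add_one] at this
  ring_nf at this ⊢
  omega

section CombWord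

variable {n m a : ℕ}

/-- Column `a + 1` separates the vertical offsets. -/
def combWord (n a : ℕ) : ℕ × ℕ → Option Bool := fun p =>
  if p.1 < a then some true
  else if p.1 = a + 1 then some (decide (p.2 = 0))
  else if p.1 ∈ gridLine (n - 1) a then some false
  else none

lemma combWord_of_lt {X Y : ℕ} (h : X < a) : combWord n a (X, Y) = some true := by
  simp [combWord, h]

lemma combWord_add_one (Y : ℕ) : combWord n a (a + 1, Y) = some (decide (Y = 0)) := by
  simp [combWord]

lemma combWord_of_mem_gridLine {X Y : ℕ} (hX : X ∈ gridLine (n - 1) a) (haX : a ≤ X)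
    (hXa : X ≠ a + 1) : combWord n a (X, Y) = some false := by
  simp [combWord, hX, hXa, not_lt.mpr haX]

lemma unbordered2_combWord (ha : 2 ≤ a) (han : a + 3 ≤ n) (hm : 0 < m) :
    Unbordered2 n m (combWord n a) := by
  refine unbordered2_of_distinctAtOffset (p₀ := (0, 0))
    (mem_domain2.mpr ⟨(by omega : 0 < n), hm, by simp [combWord_of_lt (by omega : 0 < a)]⟩) ?_
  intro u v hu hv huv
  rcases Nat.eq_zero_or_pos u with rfl | hu0
  · have hv0 : v ≠ 0 := by simpa using huv
    have h : DistinctAtOffset n m (combWord n a) 0 v :=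
      distinctAtOffset_of_eq_some (by omega) hv (by omega) hm (combWord_add_one v)
        (combWord_add_one 0) (by simpa using hv0) (by simp) (by simp)
    simpa using And.intro h h
  · obtain ⟨g, hg, hug, hga⟩ :=
      exists_mem_gridLine_window (N := n - 1) (by omega : 0 < a) (by omega : u ≤ n - 1)
    have hag : a ≤ g := (eq_zero_or_le_of_mem_gridLine (by omega) hg).resolve_left (by omega)
    have hgrid : ∀ Y, combWord n a (g, Y) = some false := fun Y =>
      combWord_of_mem_gridLine hg hag fun h => add_one_notMem_gridLine ha (by omega) (h ▸ hg)
    have hgN : g < n := by have := (mem_gridLine.mp hg).1; omega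
    exact ⟨distinctAtOffset_of_eq_some hgN hv (by omega) hm (hgrid v)
        (combWord_of_lt (by omega : g - u < a)) (by decide) (by omega) (by omega),
      distinctAtOffset_of_eq_some (by omega) hv hgN hm (combWord_of_lt (by omega : g - u < a))
        (hgrid 0) (by decide) (by omega) (by omega)⟩

lemma card_domain2_combWord_le : #(domain2 n m (combWord n a)) ≤ (a + (n - 1) / a + 3) * m := by
  have hsub : domain2 n m (combWord n a) ⊆ (range a ∪ {a + 1} ∪ gridLine (n - 1) a) ×ˢ range m := by
    intro p hp
    obtain ⟨-, hpm, hsome⟩ := mem_domain2.mp hp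
    simp only [mem_product, mem_union, mem_range, mem_singleton]
    refine ⟨?_, hpm⟩
    unfold combWord at hsome
    split_ifs at hsome <;> simp_all
  have hcols : #(range a ∪ {a + 1} ∪ gridLine (n - 1) a) ≤ a + 1 + ((n - 1) / a + 2) :=
    (card_union_le _ _).trans
      (add_le_add ((card_union_le _ _).trans (by simp)) card_gridLine_le)
  calc #(domain2 n m (combWord n a)) ≤ #(range a ∪ {a + 1} ∪ gridLine (n - 1) a) * m := by
        simpa using card_le_card hsub
    _ ≤ (a + 1 + ((n - 1) / a + 2)) * m := Nat.mul_le_mul_right m hcols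
    _ = (a + (n - 1) / a + 3) * m := by ring

end CombWord

lemma exists_unbordered2_card_domain2_le_sqrt_left {n m : ℕ} (hn : 16 ≤ n) (hm : 0 < m) :
    ∃ w : ℕ × ℕ → Option Bool,
      Unbordered2 n m w ∧ (#(domain2 n m w) : ℝ) ≤ m * (2 * √n + 5) := by
  have ha : 4 ≤ n.sqrt := Nat.le_sqrt.mpr (by omega)
  have han : n.sqrt + 3 ≤ n := by
    have := Nat.sqrt_le n
    nlinarith
  refine ⟨combWord n n.sqrt, unbordered2_combWord (by omega) han hm, ?_⟩
  have hcard : #(domain2 n m (combWord n n.sqrt)) ≤ m * (2 * n.sqrt + 5) := by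
    have := sub_one_div_sqrt_le n
    calc _ ≤ (n.sqrt + (n - 1) / n.sqrt + 3) * m := card_domain2_combWord_le
      _ ≤ m * (2 * n.sqrt + 5) := by rw [mul_comm]; exact Nat.mul_le_mul_left m (by omega)
  have hsqrt : (n.sqrt : ℝ) ≤ √n := Real.nat_sqrt_le_real_sqrt
  calc (#(domain2 n m (combWord n n.sqrt)) : ℝ) ≤ m * (2 * n.sqrt + 5) := by exact_mod_cast hcard
    _ ≤ m * (2 * √n + 5) := by gcongr

section GridWord

variable {n m a b X Y : ℕ}

def gridWord (n m a b : ℕ) : ℕ × ℕ → Option Bool := fun p =>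
  if p.2 < b then (if p.1 < a ∨ n - a ≤ p.1 then some true else none)
  else if p.2 = b + 1 then
    (if p.1 ∈ gridLine (n - 1) a then some (decide (p.1 ≠ 0)) else none)
  else if p.2 = m - 1 ∧ 0 < p.1 ∧ p.1 < a then some true
  else if p.1 ∈ gridLine (n - 1) a ∧ p.2 ∈ gridLine (m - 1) b then some false
  else none

lemma gridWord_of_lt (hY : Y < b) (hX : X < a ∨ n - a ≤ X) :
    gridWord n m a b (X, Y) = some true := by
  simp only [gridWord, if_pos hY, if_pos hX]

lemma gridWord_add_one (hX : X ∈ gridLine (n - 1) a) :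
    gridWord n m a b (X, b + 1) = some (decide (X ≠ 0)) := by
  simp [gridWord, hX]

lemma gridWord_sub_one (hbm : b + 3 ≤ m) (hX : 0 < X) (hXa : X < a) :
    gridWord n m a b (X, m - 1) = some true := by
  simp [gridWord, hX, hXa, show ¬m - 1 < b by omega, show m - 1 ≠ b + 1 by omega]

lemma gridWord_of_mem_gridLine (han : a < n) (hb : 2 ≤ b) (hbm : b + 3 ≤ m)
    (hX : X ∈ gridLine (n - 1) a) (hY : Y ∈ gridLine (m - 1) b) (hbY : b ≤ Y) :
    gridWord n m a b (X, Y) = some false := by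
  have hYb : Y ≠ b + 1 := fun h => add_one_notMem_gridLine hb (by omega) (h ▸ hY)
  have hXa : X = 0 ∨ a ≤ X := eq_zero_or_le_of_mem_gridLine (by omega) hX
  have htop : ¬(Y = m - 1 ∧ 0 < X ∧ X < a) := by omega
  simp [gridWord, hX, hY, hYb, htop, not_lt.mpr hbY]

lemma unbordered2_gridWord (ha : 0 < a) (han : a < n) (hb : 2 ≤ b) (hbm : b + 3 ≤ m) :
    Unbordered2 n m (gridWord n m a b) := by
  refine unbordered2_of_distinctAtOffset (p₀ := (0, 0))
    (mem_domain2.mpr ⟨by omega, by omega, by simp [gridWord_of_lt (by omega : 0 < b) (.inl ha)]⟩) ?_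
  intro u v hu hv huv
  rcases Nat.eq_zero_or_pos v with rfl | hv0
  · have hu0 : 0 < u := by simp at huv; omega
    suffices h : DistinctAtOffset n m (gridWord n m a b) u 0 from ⟨h, by simpa using h.neg⟩
    by_cases hug : u ∈ gridLine (n - 1) a
    · exact distinctAtOffset_of_eq_some hu (by omega) (by omega) (by omega)
        (gridWord_add_one hug) (gridWord_add_one zero_mem_gridLine) (by simp; omega)
        (by simp) (by simp)
    · obtain ⟨g, hg, hug', hga⟩ := exists_mem_gridLine_window (N := n - 1) ha (by omega : u ≤ n - 1)
      have hgu : g ≠ u := fun h => hug (h ▸ hg)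
      have hag : a ≤ g := (eq_zero_or_le_of_mem_gridLine (by omega) hg).resolve_left (by omega)
      have hgn := (mem_gridLine.mp hg).1
      exact distinctAtOffset_of_eq_some (by omega) (by omega) (by omega) (by omega)
        (gridWord_of_mem_gridLine han hb hbm hg self_mem_gridLine (by omega))
        (gridWord_sub_one hbm (by omega : 0 < g - u) (by omega)) (by decide) (by omega) (by omega)
  · obtain ⟨h, hh, hvh, hhb⟩ :=
      exists_mem_gridLine_window (N := m - 1) (by omega : 0 < b) (by omega : v ≤ m - 1)
    have hbh : b ≤ h := (eq_zero_or_le_of_mem_gridLine (by omega) hh).resolve_left (by omega)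
    have hhm := (mem_gridLine.mp hh).1
    have hgrid : ∀ {g}, g ∈ gridLine (n - 1) a → gridWord n m a b (g, h) = some false :=
      fun hg => gridWord_of_mem_gridLine han hb hbm hg hh hbh
    constructor
    · obtain ⟨g, hg, hug, hga⟩ := exists_mem_gridLine_window (N := n - 1) ha (by omega : u ≤ n - 1)
      have hgn := (mem_gridLine.mp hg).1
      exact distinctAtOffset_of_eq_some (by omega) (by omega) (by omega) (by omega) (hgrid hg)
        (gridWord_of_lt (by omega : h - v < b) (.inl (by omega : g - u < a))) (by decide)
        (by omega) (by omega)
    · rcases le_or_gt (n - a) u with hua | hua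
      · exact distinctAtOffset_of_eq_some (by omega) (by omega) hu (by omega)
          (hgrid zero_mem_gridLine) (gridWord_of_lt (by omega : h - v < b) (.inr hua)) (by decide)
          (by omega) (by omega)
      · obtain ⟨g, hg, hg₁, hg₂⟩ :=
          exists_mem_gridLine_window (N := n - 1) ha (by omega : n - a - u ≤ n - 1)
        exact distinctAtOffset_of_eq_some (by omega) (by omega) (by omega) (by omega) (hgrid hg)
          (gridWord_of_lt (by omega : h - v < b) (.inr (by omega : n - a ≤ g + u))) (by decide)
          (by omega) (by omega)

lemma card_domain2_gridWord_le :
    #(domain2 n m (gridWord n m a b)) ≤ 2 * a * b + a + ((n - 1) / a + 2) * ((m - 1) / b + 3) := by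
  have hsub : domain2 n m (gridWord n m a b) ⊆
      ((range a ∪ Ico (n - a) n) ×ˢ range b ∪ gridLine (n - 1) a ×ˢ {b + 1}) ∪
        (Ioo 0 a ×ˢ {m - 1} ∪ gridLine (n - 1) a ×ˢ gridLine (m - 1) b) := by
    intro p hp
    obtain ⟨hpn, -, hsome⟩ := mem_domain2.mp hp
    simp only [mem_union, mem_product, mem_range, mem_Ico, mem_Ioo, mem_singleton]
    unfold gridWord at hsome
    split_ifs at hsome <;> simp_all
  have hblocks : #((range a ∪ Ico (n - a) n) ×ˢ range b) ≤ 2 * a * b := by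
    rw [card_product, card_range]
    exact Nat.mul_le_mul_right b ((card_union_le _ _).trans (by simp; omega))
  have hmarker : #(gridLine (n - 1) a ×ˢ {b + 1}) ≤ (n - 1) / a + 2 := by
    rw [card_product, card_singleton, mul_one]
    exact card_gridLine_le
  have htop : #(Ioo 0 a ×ˢ {m - 1}) ≤ a := by simp
  have hgrid : #(gridLine (n - 1) a ×ˢ gridLine (m - 1) b) ≤
      ((n - 1) / a + 2) * ((m - 1) / b + 2) := by
    rw [card_product]
    exact Nat.mul_le_mul card_gridLine_le card_gridLine_le
  calc #(domain2 n m (gridWord n m a b))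
      ≤ #((range a ∪ Ico (n - a) n) ×ˢ range b) + #(gridLine (n - 1) a ×ˢ {b + 1}) +
          (#(Ioo 0 a ×ˢ {m - 1}) + #(gridLine (n - 1) a ×ˢ gridLine (m - 1) b)) :=
        (card_le_card hsub).trans ((card_union_le _ _).trans
          (add_le_add (card_union_le _ _) (card_union_le _ _)))
    _ ≤ 2 * a * b + ((n - 1) / a + 2) + (a + ((n - 1) / a + 2) * ((m - 1) / b + 2)) :=
        add_le_add (add_le_add hblocks hmarker) (add_le_add htop hgrid)
    _ = 2 * a * b + a + ((n - 1) / a + 2) * ((m - 1) / b + 3) := by ring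

end GridWord

lemma exists_unbordered2_card_domain2_le_sqrt_mul {n m : ℕ} (hn : 16 ≤ n) (hm : 16 ≤ m) :
    ∃ w : ℕ × ℕ → Option Bool, Unbordered2 n m w ∧
      (#(domain2 n m w) : ℝ) ≤ 2 * √2 * √(n * m) + 8 * (√n + √m) + 28 := by
  set a := n.sqrt
  set b := (m / 2).sqrt
  have ha : 4 ≤ a := Nat.le_sqrt.mpr (by omega)
  have hb : 2 ≤ b := Nat.le_sqrt.mpr (by omega)
  have haa : a * a ≤ n := Nat.sqrt_le n
  have hbb : b * b ≤ m / 2 := Nat.sqrt_le (m / 2)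
  have h4a : 4 * a ≤ a * a := Nat.mul_le_mul_right a ha
  have h2b : 2 * b ≤ b * b := Nat.mul_le_mul_right b hb
  refine ⟨gridWord n m a b, unbordered2_gridWord (by omega) (by omega) hb (by omega), ?_⟩
  have hcard : #(domain2 n m (gridWord n m a b)) ≤ 4 * a * b + 8 * a + 8 * b + 28 := by
    have hd : (n - 1) / a ≤ a + 2 := sub_one_div_sqrt_le n
    have he : (m - 1) / b ≤ 2 * b + 4 := sub_one_div_sqrt_half_le m
    calc _ ≤ 2 * a * b + a + ((n - 1) / a + 2) * ((m - 1) / b + 3) := card_domain2_gridWord_le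
      _ ≤ 2 * a * b + a + (a + 4) * (2 * b + 7) :=
        Nat.add_le_add_left (Nat.mul_le_mul (by omega) (by omega)) _
      _ = 4 * a * b + 8 * a + 8 * b + 28 := by ring
  have hsa : (a : ℝ) ≤ √n := Real.nat_sqrt_le_real_sqrt
  have hsb : 2 * (b : ℝ) ≤ √2 * √m := by
    rw [← Real.sqrt_mul zero_le_two]
    refine Real.le_sqrt_of_sq_le ?_
    have hbm : 2 * (b * b) ≤ m := by omega
    have hbm' : (2 * (b * b) : ℝ) ≤ m := by exact_mod_cast hbm
    nlinarith
  have hsbm : (b : ℝ) ≤ √m := by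
    refine Real.le_sqrt_of_sq_le ?_
    have hbm : b * b ≤ m := by omega
    exact_mod_cast (sq b).trans_le hbm
  have hprod : 4 * (a : ℝ) * b ≤ 2 * √2 * √(n * m) := by
    rw [Real.sqrt_mul (Nat.cast_nonneg n)]
    have := mul_le_mul hsa hsb (by positivity) (Real.sqrt_nonneg n)
    nlinarith
  calc (#(domain2 n m (gridWord n m a b)) : ℝ) ≤ 4 * a * b + 8 * a + 8 * b + 28 := by
        exact_mod_cast hcard
    _ ≤ 2 * √2 * √(n * m) + 8 * (√n + √m) + 28 := by linarith

lemma exists_unbordered2_card_domain2_le {n m : ℕ} (hn : 0 < n) (hm : 0 < m)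
    (hlarge : 16 ≤ n ∨ 16 ≤ m) :
    ∃ w : ℕ × ℕ → Option Bool, Unbordered2 n m w ∧
      (#(domain2 n m w) : ℝ) ≤ 2 * √2 * √(n * m) + 120 * (√n + √m) := by
  have hsn : (1 : ℝ) ≤ √n := Real.one_le_sqrt.mpr (by exact_mod_cast hn)
  have hsm : (1 : ℝ) ≤ √m := Real.one_le_sqrt.mpr (by exact_mod_cast hm)
  have hprod : 0 ≤ 2 * √2 * √(n * m) := by positivity
  have four_le_sqrt : ∀ {k : ℕ}, 16 ≤ k → (4 : ℝ) ≤ √k := fun hk =>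
    Real.le_sqrt_of_sq_le (by norm_num; exact_mod_cast hk)
  rcases le_or_gt 16 n with hn16 | hn16 <;> rcases le_or_gt 16 m with hm16 | hm16
  · obtain ⟨w, hw, hcard⟩ := exists_unbordered2_card_domain2_le_sqrt_mul hn16 hm16
    exact ⟨w, hw, by linarith [four_le_sqrt hn16]⟩
  · obtain ⟨w, hw, hcard⟩ := exists_unbordered2_card_domain2_le_sqrt_left hn16 hm
    have : (m : ℝ) * (2 * √n + 5) ≤ 15 * (2 * √n + 5) := by
      gcongr; exact_mod_cast (by omega : m ≤ 15)
    exact ⟨w, hw, by linarith [four_le_sqrt hn16]⟩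
  · obtain ⟨w, hw, hcard⟩ := exists_unbordered2_card_domain2_le_sqrt_left hm16 hn
    have : (n : ℝ) * (2 * √m + 5) ≤ 15 * (2 * √m + 5) := by
      gcongr; exact_mod_cast (by omega : n ≤ 15)
    refine ⟨w ∘ Prod.swap, hw.swap, ?_⟩
    rw [card_domain2_swap]
    linarith [four_le_sqrt hm16]
  · omega

/-- There exists a constant `C > 0` such that for all `n, m ≥ 1`,
`HB2₂(n,m) ≥ nm - 2√2·√(nm) - C(√n + √m)` over a binary alphabet; consequently the same
lower bound holds for `HB2_k(n,m)` for every `k ≥ 2`. -/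
theorem HB2_lower_bound :
    ∃ C : ℝ, 0 < C ∧ ∀ k n m : ℕ, 2 ≤ k → 1 ≤ n → 1 ≤ m →
      (n : ℝ) * (m : ℝ) - 2 * Real.sqrt 2 * Real.sqrt ((n : ℝ) * (m : ℝ)) -
        C * (Real.sqrt (n : ℝ) + Real.sqrt (m : ℝ)) ≤ (HB2 k n m : ℝ) := by
  refine ⟨120, by norm_num, fun k n m hk hn hm => ?_⟩
  by_cases hlarge : 16 ≤ n ∨ 16 ≤ m
  · obtain ⟨w, hw, hcard⟩ := exists_unbordered2_card_domain2_le hn hm hlarge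
    linarith [sub_card_domain2_le_HB2 hk hw]
  · have hsmall : (n * m : ℝ) ≤ 225 := by
      exact_mod_cast Nat.mul_le_mul (by omega : n ≤ 15) (by omega : m ≤ 15)
    have hsn : (1 : ℝ) ≤ √n := Real.one_le_sqrt.mpr (by exact_mod_cast hn)
    have hsm : (1 : ℝ) ≤ √m := Real.one_le_sqrt.mpr (by exact_mod_cast hm)
    have hprod : 0 ≤ 2 * √2 * √(n * m) := by positivity
    have hHB : (0 : ℝ) ≤ HB2 k n m := Nat.cast_nonneg _
    linarith
end

section
/- For all k ≥ 2 and all n, m ≥ 1, HB2_k(n, m) ≤ mn − √((2k/(k − 1))(2nm − n − m)). -/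
private theorem HB2aux_main_count (k n m : ℕ) (hk : 2 ≤ k) (hn : 1 ≤ n) (hm : 1 ≤ m)
    (w : ℕ × ℕ → Option (Fin k)) (hw : Unbordered2 n m w) :
    (k:ℝ) * (4*(n:ℝ)*m - 2*n - 2*m) ≤ ((k:ℝ)-1) * ((domain2 n m w).card:ℝ) ^ 2 := by
  classical
  set D := domain2 n m w with hD
  set d := D.card with hd
  -- the set of nonzero vectors
  set V : Finset (ℤ × ℤ) :=
    (Finset.Icc (-(n-1:ℤ)) ((n:ℤ)-1) ×ˢ Finset.Icc (-(m-1:ℤ)) ((m:ℤ)-1)).erase (0,0) with hV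
  have hVcard : V.card = (2*n-1)*(2*m-1) - 1 := by
    rw [hV, Finset.card_erase_of_mem, Finset.card_product, Int.card_Icc, Int.card_Icc]
    · congr 1
      · congr 1 <;> omega
    · simp only [Finset.mem_erase, Finset.mem_product, Finset.mem_Icc]
      constructor <;> constructor <;> omega
  set S : Finset ((ℕ×ℕ)×(ℕ×ℕ)) := (D ×ˢ D).filter (fun pq => ¬ (w pq.1 = w pq.2)) with hS
  set T : Finset ((ℕ×ℕ)×(ℕ×ℕ)) := (D ×ˢ D).filter (fun pq => w pq.1 = w pq.2) with hT
  have hST : T.card + S.card = d^2 := by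
    rw [hS, hT, Finset.card_filter_add_card_filter_not, Finset.card_product, sq]
  -- injection from V into S
  have hkey : ∀ v ∈ V, ∃ pq : (ℕ×ℕ)×(ℕ×ℕ), pq ∈ S ∧
      ((pq.1.1:ℤ) - pq.2.1, (pq.1.2:ℤ) - pq.2.2) = v := by
    rintro ⟨x, y⟩ hv
    simp only [hV, Finset.mem_erase, Finset.mem_product, Finset.mem_Icc] at hv
    obtain ⟨hne, ⟨hx1, hx2⟩, hy1, hy2⟩ := hv
    obtain ⟨p, hp, q, hq, h1, h2, h3⟩ := hw.2 x y (abs_le.2 ⟨by omega, hx2⟩)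
      (abs_le.2 ⟨by omega, hy2⟩) (by simpa [Prod.ext_iff] using hne)
    exact ⟨(p, q), by simp [hS, hD, Finset.mem_filter, Finset.mem_product, hp, hq, h3], by
      simp [h1, h2]⟩
  have hVS : V.card ≤ S.card := by
    choose f hf1 hf2 using hkey
    calc V.card = (V.attach.image (fun v => f v.1 v.2)).card := by
          rw [Finset.card_image_of_injective _ ?_, Finset.card_attach]
          intro a b hab
          simp only at hab
          refine Subtype.ext ?_
          rw [← hf2 a.1 a.2, ← hf2 b.1 b.2, hab]
      _ ≤ S.card := Finset.card_le_card (by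
          intro x hx
          simp only [Finset.mem_image, Finset.mem_attach, true_and] at hx
          obtain ⟨v, rfl⟩ := hx
          exact hf1 v.1 v.2)
  -- color fibers
  have hk0 : (0:ℕ) < k := by omega
  set fval : ℕ×ℕ → Fin k := fun p => (w p).getD ⟨0, hk0⟩ with hfval
  have hwp : ∀ p ∈ D, w p = some (fval p) := by
    intro p hp
    have : (w p).isSome := by
      simp only [hD, domain2, Finset.mem_filter] at hp
      exact hp.2
    obtain ⟨a, ha⟩ := Option.isSome_iff_exists.mp this
    simp [hfval, ha]
  set Dc : Fin k → Finset (ℕ×ℕ) := fun c => D.filter (fun p => fval p = c) with hDc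
  have hdsum : d = ∑ c : Fin k, (Dc c).card :=
    Finset.card_eq_sum_card_fiberwise (fun p _ => Finset.mem_univ (fval p))
  have hTsum : T.card = ∑ c : Fin k, (Dc c).card ^ 2 := by
    rw [Finset.card_eq_sum_card_fiberwise
      (f := fun pq : (ℕ×ℕ)×(ℕ×ℕ) => fval pq.1) (t := Finset.univ) (fun pq _ => Finset.mem_univ _)]
    refine Finset.sum_congr rfl fun c _ => ?_
    have : T.filter (fun pq => fval pq.1 = c) = Dc c ×ˢ Dc c := by
      ext ⟨p, q⟩
      simp only [hT, hDc, Finset.mem_filter, Finset.mem_product]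
      constructor
      · rintro ⟨⟨⟨hp, hq⟩, heq⟩, hc⟩
        refine ⟨⟨hp, hc⟩, hq, ?_⟩
        have := (hwp p hp).symm.trans (heq.trans (hwp q hq))
        rw [← hc]; exact (Option.some_injective _ this).symm
      · rintro ⟨⟨hp, hcp⟩, hq, hcq⟩
        exact ⟨⟨⟨hp, hq⟩, by rw [hwp p hp, hwp q hq, hcp, hcq]⟩, hcp⟩
    rw [this, Finset.card_product, sq]
  -- Cauchy-Schwarz
  have hCS : ((d:ℝ))^2 ≤ (k:ℝ) * T.card := by
    have := sq_sum_le_card_mul_sum_sq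
      (s := (Finset.univ : Finset (Fin k))) (f := fun c => ((Dc c).card : ℝ))
    simp only [Finset.card_univ, Fintype.card_fin] at this
    calc ((d:ℝ))^2 = (∑ c : Fin k, ((Dc c).card:ℝ))^2 := by rw [hdsum]; push_cast; ring
      _ ≤ (k:ℝ) * ∑ c : Fin k, ((Dc c).card:ℝ)^2 := this
      _ = (k:ℝ) * T.card := by rw [hTsum]; push_cast; ring
  -- cardinality of V in ℝ
  have hVR : (V.card : ℝ) = 4*(n:ℝ)*m - 2*n - 2*m := by
    have h1 : (1:ℕ) ≤ 2*n - 1 := by omega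
    have h2 : (1:ℕ) ≤ 2*m - 1 := by omega
    have h3 : (1:ℕ) ≤ (2*n-1)*(2*m-1) := Nat.mul_le_mul h1 h2
    rw [hVcard]
    rw [Nat.cast_sub h3, Nat.cast_mul, Nat.cast_sub (by omega), Nat.cast_sub (by omega)]
    push_cast
    ring
  -- combine
  have hVS' : (V.card : ℝ) ≤ S.card := by exact_mod_cast hVS
  have hST' : (T.card : ℝ) + S.card = ((d:ℝ))^2 := by exact_mod_cast hST
  have hk' : (2:ℝ) ≤ k := by exact_mod_cast hk
  nlinarith [hVS', hST', hCS, hVR, hk']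


private theorem HB2aux_sqrt_bound (k n m : ℕ) (hk : 2 ≤ k) (hn : 1 ≤ n) (hm : 1 ≤ m) :
    Real.sqrt ((2 * (k : ℝ) / ((k : ℝ) - 1)) *
        (2 * (n : ℝ) * (m : ℝ) - (n : ℝ) - (m : ℝ))) ≤ (m : ℝ) * (n : ℝ) := by
  have hk' : (2:ℝ) ≤ k := by exact_mod_cast hk
  have hn' : (1:ℝ) ≤ n := by exact_mod_cast hn
  have hm' : (1:ℝ) ≤ m := by exact_mod_cast hm
  have hfac : 2 * (k:ℝ) / ((k:ℝ) - 1) ≤ 4 := by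
    rw [div_le_iff₀ (by linarith)]; linarith
  have hpos : (0:ℝ) ≤ 2 * (n:ℝ) * m - n - m := by nlinarith
  have h4 : 4 * (2 * (n:ℝ) * m - n - m) ≤ ((m:ℝ) * n)^2 := by
    rcases Nat.lt_or_ge n 2 with h2n | h2n
    · have hn1 : n = 1 := by omega
      subst hn1
      push_cast
      nlinarith [sq_nonneg ((m:ℝ) - 2)]
    · rcases Nat.lt_or_ge m 2 with h2m | h2m
      · have hm1 : m = 1 := by omega
        subst hm1
        push_cast
        nlinarith [sq_nonneg ((n:ℝ) - 2)]
      · have h2n' : (2:ℝ) ≤ n := by exact_mod_cast h2n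
        have h2m' : (2:ℝ) ≤ m := by exact_mod_cast h2m
        nlinarith [sq_nonneg ((n:ℝ) * m - 4)]
  have hX : (2 * (k : ℝ) / ((k : ℝ) - 1)) * (2 * (n : ℝ) * m - n - m) ≤ ((m:ℝ) * n)^2 :=
    le_trans (mul_le_mul_of_nonneg_right hfac hpos) h4
  have := Real.sqrt_le_sqrt hX
  rwa [Real.sqrt_sq (by positivity)] at this

/-- For all `k ≥ 2` and all `n, m ≥ 1`,
`HB2_k(n,m) ≤ mn - √((2k/(k-1))(2nm - n - m))`. -/
theorem HB2_upper_bound (k n m : ℕ) (hk : 2 ≤ k) (hn : 1 ≤ n) (hm : 1 ≤ m) :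
    (HB2 k n m : ℝ) ≤ (m : ℝ) * (n : ℝ) -
      Real.sqrt ((2 * (k : ℝ) / ((k : ℝ) - 1)) *
        (2 * (n : ℝ) * (m : ℝ) - (n : ℝ) - (m : ℝ))) := by
  classical
  set Sset : Set ℕ :=
    {h | ∃ w : ℕ × ℕ → Option (Fin k), Unbordered2 n m w ∧ holes2 n m w = h} with hSset
  have hHB2 : HB2 k n m = sSup Sset := rfl
  rcases Set.eq_empty_or_nonempty Sset with hE | hne
  · rw [hHB2, hE]
    have h0 : (sSup (∅ : Set ℕ)) = 0 := csSup_empty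
    rw [h0]
    have := HB2aux_sqrt_bound k n m hk hn hm
    simpa using by linarith
  · have hbdd : BddAbove Sset := by
      refine ⟨n * m, fun h hh => ?_⟩
      obtain ⟨w, _, rfl⟩ := hh
      exact Nat.sub_le _ _
    have hmem : sSup Sset ∈ Sset := Nat.sSup_mem hne hbdd
    obtain ⟨w, hw, hh⟩ := hmem
    rw [hHB2, ← hh]
    set D := domain2 n m w with hD
    have hdle : D.card ≤ n * m := by
      calc D.card ≤ (Finset.range n ×ˢ Finset.range m).card := Finset.card_filter_le _ _
        _ = n * m := by rw [Finset.card_product, Finset.card_range, Finset.card_range]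
    have hholes : ((holes2 n m w : ℕ) : ℝ) = (n:ℝ) * m - D.card := by
      rw [holes2]
      rw [Nat.cast_sub hdle]
      push_cast
      ring
    have hmain := HB2aux_main_count k n m hk hn hm w hw
    have hk1 : (0:ℝ) < (k:ℝ) - 1 := by
      have : (2:ℝ) ≤ k := by exact_mod_cast hk
      linarith
    have hX : (2 * (k : ℝ) / ((k : ℝ) - 1)) *
        (2 * (n : ℝ) * m - n - m) ≤ ((D.card:ℝ))^2 := by
      rw [div_mul_eq_mul_div, div_le_iff₀ hk1]
      nlinarith [hmain]
    have hsqrt : Real.sqrt ((2 * (k : ℝ) / ((k : ℝ) - 1)) *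
        (2 * (n : ℝ) * m - n - m)) ≤ (D.card:ℝ) := by
      have := Real.sqrt_le_sqrt hX
      rwa [Real.sqrt_sq (by positivity)] at this
    rw [hholes]
    linarith
end

section
/- Let A be a finite alphabet and let w be an unbordered partial word of length n over A with exactly h holes. Then the set L↑(w) = {u ∈ Aⁿ : w ↑ u} is a cross-bifix-free code and |L↑(w)| = |A|^h. -/
/-!
A word `x` that is a proper prefix of one filling of `w` and a suffix of another fills both the
prefix and the suffix of `w` of length `|x|`. Two partial words with a common filling are
compatible, so these would form a border of `w`. The count `|A|^h` holds because each hole is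
filled independently.
-/

namespace PartialWord

variable {A : Type*}

theorem compatible_iff_forall₂ {w v : List (Option A)} :
    Compatible w v ↔ List.Forall₂ (fun o o' => ∀ a ∈ o, ∀ b ∈ o', a = b) w v := by
  rw [List.forall₂_iff_get]
  refine and_congr_right fun hlen => ⟨fun h i hw hv a ha b hb => ?_, fun h i hi => ?_⟩
  · have := h i (by simp_all [domain])
    simp_all
  · simp only [Finset.mem_inter, domain, Finset.mem_filter, Finset.mem_range] at hi
    obtain ⟨⟨hw, hwi⟩, hv, hvi⟩ := hi
    simp only [List.getD_eq_getElem _ _ hw, List.getD_eq_getElem _ _ hv] at hwi hvi ⊢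
    obtain ⟨a, ha⟩ := Option.isSome_iff_exists.mp hwi
    obtain ⟨b, hb⟩ := Option.isSome_iff_exists.mp hvi
    have := h i hw hv
    simp_all

def IsFilling (w : List (Option A)) (u : List A) : Prop :=
  List.Forall₂ (fun o a => ∀ b ∈ o, b = a) w u

theorem compatible_map_some_iff {w : List (Option A)} {u : List A} :
    Compatible w (u.map some) ↔ IsFilling w u := by
  simp [compatible_iff_forall₂, IsFilling]

theorem IsFilling.length_eq {w : List (Option A)} {u : List A} (h : IsFilling w u) :
    w.length = u.length :=
  List.Forall₂.length_eq h

theorem IsFilling.compatible {w v : List (Option A)} {u : List A}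
    (hw : IsFilling w u) (hv : IsFilling v u) : Compatible w v := by
  rw [compatible_iff_forall₂]
  induction hw generalizing v with
  | nil => cases hv; exact .nil
  | cons hab _ ih =>
    cases hv with
    | cons hcb hv => exact .cons (fun a ha b hb => (hab a ha).trans (hcb b hb).symm) (ih hv)

theorem IsFilling.take_of_prefix {w : List (Option A)} {u x : List A}
    (h : IsFilling w u) (hx : x <+: u) : IsFilling (w.take x.length) x := by
  obtain ⟨t, rfl⟩ := hx
  exact List.forall₂_take_append _ _ _ h

theorem IsFilling.drop_of_suffix {w : List (Option A)} {u x : List A}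
    (h : IsFilling w u) (hx : x <:+ u) : IsFilling (w.drop (w.length - x.length)) x := by
  obtain ⟨t, rfl⟩ := hx
  have : w.length - x.length = t.length := by simp [h.length_eq]
  rw [this]
  exact List.forall₂_drop_append _ _ _ h

theorem IsFilling.not_suffix_of_prefix {w : List (Option A)} {c₁ c₂ x : List A}
    (h₁ : IsFilling w c₁) (hw : Unbordered w) (h₂ : IsFilling w c₂) (hx : x ≠ [])
    (hpre : x <+: c₁) (hlt : x.length < c₁.length) : ¬ x <:+ c₂ := by
  intro hsuf
  have hlen := h₁.length_eq
  have hpos := List.length_pos_iff.mpr hx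
  refine hw _ _ (List.take_prefix _ w) (List.drop_suffix _ w) ?_ ?_ ?_
    ((h₁.take_of_prefix hpre).compatible (h₂.drop_of_suffix hsuf))
  · rw [← List.length_pos_iff, List.length_take]; omega
  all_goals simp; omega

theorem setOf_isFilling_cons (o : Option A) (w : List (Option A)) :
    {u | IsFilling (o :: w) u} =
      (fun p : A × List A => p.1 :: p.2) '' ({a | ∀ b ∈ o, b = a} ×ˢ {u | IsFilling w u}) := by
  ext (_ | ⟨a, u⟩) <;> simp [IsFilling]

/-- With `Nat.card A = 0` for infinite `A`, both sides vanish as soon as `w` has a hole. -/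
theorem ncard_setOf_isFilling (w : List (Option A)) :
    {u | IsFilling w u}.ncard = Nat.card A ^ holes w := by
  induction w with
  | nil => simp [IsFilling, holes]
  | cons o w ih =>
    have hcons : Function.Injective fun p : A × List A => p.1 :: p.2 := fun p q h => by
      simpa [Prod.ext_iff] using h
    rw [setOf_isFilling_cons, Set.ncard_image_of_injective _ hcons, Set.ncard_prod, ih]
    cases o <;> simp [holes, pow_succ, mul_comm]

end PartialWord

/-- Let `A` be a finite alphabet and `w` an unbordered partial word of
length `n` over `A` with exactly `h` holes. Then `L↑(w) = {u ∈ Aⁿ : w ↑ u}` is a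
cross-bifix-free code and `|L↑(w)| = |A|^h`. -/
theorem fillings_crossBifixFree {A : Type*} [Fintype A] (n h : ℕ) (w : List (Option A))
    (hlen : w.length = n) (hw : PartialWord.Unbordered w) (hh : PartialWord.holes w = h) :
    (∀ c₁ ∈ {u : List A | u.length = n ∧ PartialWord.Compatible w (u.map some)},
      ∀ c₂ ∈ {u : List A | u.length = n ∧ PartialWord.Compatible w (u.map some)},
      ∀ x : List A, x ≠ [] → x <+: c₁ → x.length < c₁.length → ¬ x <:+ c₂) ∧
    Set.ncard {u : List A | u.length = n ∧ PartialWord.Compatible w (u.map some)} =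
      Fintype.card A ^ h := by
  have hL : {u : List A | u.length = n ∧ PartialWord.Compatible w (u.map some)} =
      {u | PartialWord.IsFilling w u} := by
    ext u
    simp only [Set.mem_ofPred_eq, PartialWord.compatible_map_some_iff]
    exact ⟨And.right, fun hu => ⟨hlen ▸ hu.length_eq.symm, hu⟩⟩
  rw [hL, PartialWord.ncard_setOf_isFilling, Nat.card_eq_fintype_card, hh]
  exact ⟨fun c₁ h₁ c₂ h₂ x hx hpre hlt => h₁.not_suffix_of_prefix hw h₂ hx hpre hlt, rfl⟩
end
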